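/- Let n ≥ 4, let G be a simple graph on a vertex set V with |V| = n, m edges, and degree function d, and let f be a rectilinear drawing of the complete graph on a vertex set W with |W| = n. Then the average over all n! bijections σ : V → W of the crossing number of the rectilinear drawing v ↦ f(σ(v)) of G equals (cr(f) / (3·C(n,4))) · ( C(m,2) − Σ_{v∈V} C(d(v),2) ). -/

import Mathlib

/-- A rectilinear drawing: an injective map of the vertices into the plane
with no three vertex images collinear. -/
def IsRectilinearDrawing {V : Type*} (f : V → ℝ × ℝ) : Prop :=
  Function.Injective f ∧
    ∀ a b c : V, a ≠ b → a ≠ c → b ≠ c →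
      ¬ Collinear ℝ ({f a, f b, f c} : Set (ℝ × ℝ))

/-- The open straight-line segment joining the images of the endpoints of an edge. -/
def edgeSeg {V : Type*} (f : V → ℝ × ℝ) : Sym2 V → Set (ℝ × ℝ) :=
  Sym2.lift ⟨fun a b => openSegment ℝ (f a) (f b), fun a b => openSegment_symm ℝ (f a) (f b)⟩

/-- Two edges (with disjoint vertex sets) cross if their open segments meet. -/
def EdgesCross {V : Type*} (f : V → ℝ × ℝ) (e₁ e₂ : Sym2 V) : Prop :=
  (∀ v, v ∈ e₁ → v ∉ e₂) ∧ (edgeSeg f e₁ ∩ edgeSeg f e₂).Nonempty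

lemma edgesCross_symm {V : Type*} (f : V → ℝ × ℝ) : Symmetric (EdgesCross f) :=
  fun _ _ h => ⟨fun v hv hv' => h.1 v hv' hv, by rw [Set.inter_comm]; exact h.2⟩

/-- The crossing number of a drawing: the number of unordered pairs of edges of `G`
that cross in the drawing. -/
noncomputable def crossingNumber {V : Type*} (G : SimpleGraph V) (f : V → ℝ × ℝ) : ℕ :=
  Set.ncard {p : Sym2 (Sym2 V) |
    (∀ e ∈ p, e ∈ G.edgeSet) ∧ p ∈ Sym2.fromRel (r := EdgesCross f) ⟨fun _ _ h => edgesCross_symm f h⟩}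

/-- The rectilinear crossing number of a graph. -/
noncomputable def rcr {V : Type*} (G : SimpleGraph V) : ℕ :=
  sInf {k | ∃ f : V → ℝ × ℝ, IsRectilinearDrawing f ∧ crossingNumber G f = k}

/-- The complete balanced `r`-partite graph with `r` parts of size `m`. -/
def completeBalanced (r m : ℕ) : SimpleGraph (Fin r × Fin m) :=
  SimpleGraph.comap Prod.fst ⊤

instance (r m : ℕ) : DecidableRel (completeBalanced r m).Adj :=
  fun u v => inferInstanceAs (Decidable (u.1 ≠ v.1))

/-- The balanced layered graph with `r` layers of size `m`: all edges between
consecutive layers. -/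
def layeredGraph (r m : ℕ) : SimpleGraph (Fin r × Fin m) where
  Adj u v := u.1.1 + 1 = v.1.1 ∨ v.1.1 + 1 = u.1.1
  symm := ⟨fun _ _ h => h.symm⟩
  loopless := ⟨fun u h => by cases h <;> omega⟩

instance (r m : ℕ) : DecidableRel (layeredGraph r m).Adj :=
  fun u v => inferInstanceAs (Decidable (u.1.1 + 1 = v.1.1 ∨ v.1.1 + 1 = u.1.1))

/-- The `s`-fold blow-up of a graph `G`. -/
def blowup {V : Type*} (G : SimpleGraph V) (s : ℕ) : SimpleGraph (V × Fin s) :=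
  SimpleGraph.comap Prod.fst G

/-!
Exchanging the order of summation, `∑ σ, cr(G, f ∘ σ)` counts, for each unordered pair `P` of
vertex-disjoint edges of `G`, the bijections `σ` under which `σ(P)` is a crossing pair of `f`.
Since `Perm V` acts transitively on the pairs of disjoint edges of the complete graph, this count
`c` does not depend on `P`, so the sum is `c` times the number of such pairs in `G`. For the complete
graph every term equals `cr(f)`, whence `n! · cr(f) = 3 · C(n,4) · c`; and `G` has
`C(m,2) - ∑ C(d(v),2)` pairs of disjoint edges because two distinct edges share at most one vertex.
-/

open Finset

section Relabelling

variable {V W : Type*}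

def EdgesDisjoint (e₁ e₂ : Sym2 V) : Prop := ∀ v ∈ e₁, v ∉ e₂

lemma edgesDisjoint_symm : Std.Symm (EdgesDisjoint (V := V)) :=
  ⟨fun _ _ h v hv hv' => h v hv' hv⟩

lemma EdgesDisjoint.ne {e₁ e₂ : Sym2 V} (h : EdgesDisjoint e₁ e₂) : e₁ ≠ e₂ := by
  rintro rfl
  induction e₁ using Sym2.ind with | _ a b =>
  exact h a (Sym2.mem_mk_left a b) (Sym2.mem_mk_left a b)

lemma edgesDisjoint_mk_iff {a b c d : V} :
    EdgesDisjoint s(a, b) s(c, d) ↔ a ≠ c ∧ a ≠ d ∧ b ≠ c ∧ b ≠ d := by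
  simp only [EdgesDisjoint, Sym2.mem_iff, forall_eq_or_imp, forall_eq, not_or, and_assoc]

lemma edgesDisjoint_map_iff {σ : V → W} (hσ : σ.Injective) {e₁ e₂ : Sym2 V} :
    EdgesDisjoint (e₁.map σ) (e₂.map σ) ↔ EdgesDisjoint e₁ e₂ := by
  simp only [EdgesDisjoint, Sym2.mem_map]
  grind

lemma injective_vecCons_four {a b c d : V} (hab : a ≠ b) (hac : a ≠ c) (had : a ≠ d)
    (hbc : b ≠ c) (hbd : b ≠ d) (hcd : c ≠ d) : Function.Injective ![a, b, c, d] := by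
  simp only [Matrix.vecCons, Fin.cons_injective_iff, Set.mem_range, Fin.exists_fin_succ]
  simp [Function.injective_of_subsingleton]
  tauto

def crossingPairs (f : V → ℝ × ℝ) : Set (Sym2 (Sym2 V)) :=
  Sym2.fromRel (r := EdgesCross f) ⟨fun _ _ h => edgesCross_symm f h⟩

lemma edgeSeg_comp (f : W → ℝ × ℝ) (σ : V → W) (e : Sym2 V) :
    edgeSeg (f ∘ σ) e = edgeSeg f (e.map σ) := by
  induction e using Sym2.ind; rfl

lemma edgesCross_comp_iff (f : W → ℝ × ℝ) {σ : V → W} (hσ : σ.Injective) {e₁ e₂ : Sym2 V} :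
    EdgesCross (f ∘ σ) e₁ e₂ ↔ EdgesCross f (e₁.map σ) (e₂.map σ) := by
  rw [EdgesCross, EdgesCross, edgeSeg_comp, edgeSeg_comp]
  exact and_congr_left' (edgesDisjoint_map_iff hσ).symm

lemma map_mem_crossingPairs_iff (f : W → ℝ × ℝ) {σ : V → W} (hσ : σ.Injective)
    {p : Sym2 (Sym2 V)} : p.map (Sym2.map σ) ∈ crossingPairs f ↔ p ∈ crossingPairs (f ∘ σ) := by
  induction p using Sym2.ind
  simp only [crossingPairs, Sym2.map_mk, Sym2.fromRel_prop, edgesCross_comp_iff f hσ]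

lemma Sym2.map_surjective {σ : V → W} (hσ : σ.Surjective) : (Sym2.map σ).Surjective := by
  intro z
  induction z using Sym2.ind with | _ a b =>
  obtain ⟨a', rfl⟩ := hσ a
  obtain ⟨b', rfl⟩ := hσ b
  exact ⟨s(a', b'), rfl⟩

lemma mem_edgeSet_comap_iff (H : SimpleGraph W) (σ : V → W) (e : Sym2 V) :
    e ∈ (H.comap σ).edgeSet ↔ e.map σ ∈ H.edgeSet := by
  induction e using Sym2.ind; rfl

lemma crossingNumber_comap_equiv (H : SimpleGraph W) (f : W → ℝ × ℝ) (σ : V ≃ W) :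
    crossingNumber (H.comap σ) (f ∘ σ) = crossingNumber H f := by
  rw [crossingNumber, crossingNumber, ← Set.ncard_preimage_of_injective_subset_range
    (Sym2.map.injective (Sym2.map.injective σ.injective))
    fun q _ => Sym2.map_surjective (Sym2.map_surjective σ.surjective) q]
  congr 1
  ext p
  change (∀ e ∈ p, _) ∧ p ∈ crossingPairs (f ∘ σ) ↔ (∀ e ∈ p.map _, _) ∧ p.map _ ∈ crossingPairs f
  simp only [map_mem_crossingPairs_iff f σ.injective, Sym2.mem_map, forall_exists_index, and_imp,
    forall_apply_eq_imp_iff₂, mem_edgeSet_comap_iff]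

lemma crossingNumber_top_comp_equiv (f : W → ℝ × ℝ) (σ : V ≃ W) :
    crossingNumber ⊤ (f ∘ σ) = crossingNumber ⊤ f := by
  rw [← crossingNumber_comap_equiv ⊤ f σ, SimpleGraph.comap_top σ.injective]

end Relabelling

section DisjointEdgePairs

variable {V W : Type*} [Fintype V]

open Classical in
noncomputable def disjointEdgePairs (G : SimpleGraph V) : Finset (Sym2 (Sym2 V)) :=
  {p | (∀ e ∈ p, e ∈ G.edgeSet) ∧ p ∈ Sym2.fromRel edgesDisjoint_symm}

lemma mem_disjointEdgePairs {G : SimpleGraph V} {p : Sym2 (Sym2 V)} :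
    p ∈ disjointEdgePairs G ↔ (∀ e ∈ p, e ∈ G.edgeSet) ∧ p ∈ Sym2.fromRel edgesDisjoint_symm := by
  simp [disjointEdgePairs]

lemma mk_mem_disjointEdgePairs {G : SimpleGraph V} {e₁ e₂ : Sym2 V} :
    s(e₁, e₂) ∈ disjointEdgePairs G ↔
      e₁ ∈ G.edgeSet ∧ e₂ ∈ G.edgeSet ∧ EdgesDisjoint e₁ e₂ := by
  rw [mem_disjointEdgePairs, Sym2.forall_mem_pair, Sym2.fromRel_prop, and_assoc]

lemma disjointEdgePairs_mono {G H : SimpleGraph V} (h : G ≤ H) :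
    disjointEdgePairs G ⊆ disjointEdgePairs H := by
  intro p hp
  rw [mem_disjointEdgePairs] at hp ⊢
  exact ⟨fun e he => SimpleGraph.edgeSet_mono h (hp.1 e he), hp.2⟩

open Classical in
lemma crossingNumber_eq_card_filter (G : SimpleGraph V) (f : V → ℝ × ℝ) :
    crossingNumber G f = #{p ∈ disjointEdgePairs G | p ∈ crossingPairs f} := by
  rw [crossingNumber, ← Set.ncard_coe_finset]
  congr 1
  ext p
  simp only [coe_filter, Set.mem_ofPred_eq, mem_disjointEdgePairs, and_assoc]
  refine and_congr_right fun _ => (and_iff_right_of_imp ?_).symm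
  exact fun hp => Sym2.fromRel_mono _ _ (fun _ _ h => h.1) hp

lemma exists_perm_map_eq_of_mem_disjointEdgePairs_top {p q : Sym2 (Sym2 V)}
    (hp : p ∈ disjointEdgePairs ⊤) (hq : q ∈ disjointEdgePairs ⊤) :
    ∃ τ : Equiv.Perm V, p.map (Sym2.map τ) = q := by
  induction p using Sym2.ind with | _ e₁ e₂ =>
  induction e₁ using Sym2.ind with | _ a b =>
  induction e₂ using Sym2.ind with | _ c d =>
  induction q using Sym2.ind with | _ e₁' e₂' =>
  induction e₁' using Sym2.ind with | _ a' b' =>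
  induction e₂' using Sym2.ind with | _ c' d' =>
  simp only [mk_mem_disjointEdgePairs, SimpleGraph.mem_edgeSet, SimpleGraph.top_adj,
    edgesDisjoint_mk_iff] at hp hq
  obtain ⟨hab, hcd, hac, had, hbc, hbd⟩ := hp
  obtain ⟨hab', hcd', hac', had', hbc', hbd'⟩ := hq
  obtain ⟨τ, hτ⟩ := Equiv.Perm.exists_extending_pair ![a, b, c, d] ![a', b', c', d']
    (injective_vecCons_four hab hac had hbc hbd hcd)
    (injective_vecCons_four hab' hac' had' hbc' hbd' hcd')
  have h₀ : τ a = a' := hτ 0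
  have h₁ : τ b = b' := hτ 1
  have h₂ : τ c = c' := hτ 2
  have h₃ : τ d = d' := hτ 3
  exact ⟨τ, by rw [Sym2.map_mk, Sym2.map_mk, Sym2.map_mk, h₀, h₁, h₂, h₃]⟩

variable [Fintype W] [DecidableEq V] [DecidableEq W]

open Classical in
lemma card_filter_map_map_perm (P : Sym2 (Sym2 W) → Prop) (p : Sym2 (Sym2 V))
    (τ : Equiv.Perm V) :
    #{σ : V ≃ W | P ((p.map (Sym2.map τ)).map (Sym2.map σ))} =
      #{σ : V ≃ W | P (p.map (Sym2.map σ))} := by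
  refine card_equiv (τ.symm.equivCongr (Equiv.refl W)) fun σ => ?_
  simp only [mem_filter, mem_univ, true_and, Sym2.map_map, ← Sym2.map_comp]
  rfl

open Classical in
lemma card_filter_map_eq_of_mem_disjointEdgePairs_top (P : Sym2 (Sym2 W) → Prop)
    {p q : Sym2 (Sym2 V)} (hp : p ∈ disjointEdgePairs ⊤) (hq : q ∈ disjointEdgePairs ⊤) :
    #{σ : V ≃ W | P (p.map (Sym2.map σ))} = #{σ : V ≃ W | P (q.map (Sym2.map σ))} := by
  obtain ⟨τ, rfl⟩ := exists_perm_map_eq_of_mem_disjointEdgePairs_top hp hq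
  exact (card_filter_map_map_perm P p τ).symm

open Classical in
lemma sum_crossingNumber_comp_equiv (G : SimpleGraph V) (f : W → ℝ × ℝ)
    {p₀ : Sym2 (Sym2 V)} (hp₀ : p₀ ∈ disjointEdgePairs ⊤) :
    ∑ σ : V ≃ W, crossingNumber G (f ∘ σ) =
      #(disjointEdgePairs G) * #{σ : V ≃ W | p₀.map (Sym2.map σ) ∈ crossingPairs f} := by
  calc ∑ σ : V ≃ W, crossingNumber G (f ∘ σ)
      = ∑ σ : V ≃ W, #{p ∈ disjointEdgePairs G | p.map (Sym2.map σ) ∈ crossingPairs f} := by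
        simp only [crossingNumber_eq_card_filter, map_mem_crossingPairs_iff f (Equiv.injective _)]
    _ = ∑ p ∈ disjointEdgePairs G, #{σ : V ≃ W | p.map (Sym2.map σ) ∈ crossingPairs f} :=
        sum_card_bipartiteAbove_eq_sum_card_bipartiteBelow _
    _ = _ := by
        rw [← smul_eq_mul, ← sum_const]
        refine sum_congr rfl fun p hp => card_filter_map_eq_of_mem_disjointEdgePairs_top _ ?_ hp₀
        exact disjointEdgePairs_mono le_top hp

end DisjointEdgePairs

section Counting

lemma card_filter_sym2_not_isDiag {α : Type*} [DecidableEq α] (s : Finset α) :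
    #{p ∈ s.sym2 | ¬p.IsDiag} = (#s).choose 2 := by
  rw [sym2_eq_image, Sym2.filter_image_mk_not_isDiag, Sym2.card_image_offDiag]

variable {V : Type*} [Fintype V] [DecidableEq V] (G : SimpleGraph V) [DecidableRel G.Adj]

def incidentEdgePairs (v : V) : Finset (Sym2 (Sym2 V)) :=
  {p ∈ (G.incidenceFinset v).sym2 | ¬p.IsDiag}

variable {G} in
lemma mk_mem_incidentEdgePairs {v : V} {e₁ e₂ : Sym2 V} :
    s(e₁, e₂) ∈ incidentEdgePairs G v ↔
      ((e₁ ∈ G.edgeSet ∧ v ∈ e₁) ∧ e₂ ∈ G.edgeSet ∧ v ∈ e₂) ∧ e₁ ≠ e₂ := by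
  simp only [incidentEdgePairs, mem_filter, mk_mem_sym2_iff, Sym2.mk_isDiag_iff,
    G.mem_incidenceFinset, SimpleGraph.incidenceSet, Set.mem_sep_iff]

lemma card_incidentEdgePairs (v : V) : #(incidentEdgePairs G v) = (G.degree v).choose 2 := by
  rw [incidentEdgePairs, card_filter_sym2_not_isDiag, G.card_incidenceFinset_eq_degree]

lemma pairwiseDisjoint_incidentEdgePairs :
    ((univ : Finset V) : Set V).PairwiseDisjoint (incidentEdgePairs G) := by
  intro u _ v _ huv
  refine disjoint_left.2 fun p hpu hpv => ?_
  induction p using Sym2.ind with | _ e₁ e₂ =>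
  rw [mk_mem_incidentEdgePairs] at hpu hpv
  exact hpu.2 (((Sym2.mem_and_mem_iff huv).1 ⟨hpu.1.1.2, hpv.1.1.2⟩).trans
    ((Sym2.mem_and_mem_iff huv).1 ⟨hpu.1.2.2, hpv.1.2.2⟩).symm)

lemma disjoint_disjointEdgePairs_biUnion_incidentEdgePairs :
    Disjoint (disjointEdgePairs G) (univ.biUnion (incidentEdgePairs G)) := by
  refine disjoint_left.2 fun p hp hp' => ?_
  induction p using Sym2.ind with | _ e₁ e₂ =>
  simp only [mem_biUnion, mem_univ, true_and, mk_mem_incidentEdgePairs] at hp'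
  obtain ⟨v, ⟨⟨-, hv₁⟩, -, hv₂⟩, -⟩ := hp'
  exact (mk_mem_disjointEdgePairs.1 hp).2.2 v hv₁ hv₂

lemma filter_sym2_edgeFinset_not_isDiag :
    {p ∈ G.edgeFinset.sym2 | ¬p.IsDiag} =
      disjointEdgePairs G ∪ univ.biUnion (incidentEdgePairs G) := by
  ext p
  induction p using Sym2.ind with | _ e₁ e₂ =>
  simp only [mem_filter, mk_mem_sym2_iff, Sym2.mk_isDiag_iff, mem_union, mem_biUnion, mem_univ,
    true_and, mk_mem_disjointEdgePairs, mk_mem_incidentEdgePairs, SimpleGraph.mem_edgeFinset]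
  constructor
  · rintro ⟨⟨h₁, h₂⟩, hne⟩
    by_cases h : EdgesDisjoint e₁ e₂
    · exact Or.inl ⟨h₁, h₂, h⟩
    · obtain ⟨v, hv₁, hv₂⟩ : ∃ v ∈ e₁, v ∈ e₂ := by simpa [EdgesDisjoint] using h
      exact Or.inr ⟨v, ⟨⟨h₁, hv₁⟩, h₂, hv₂⟩, hne⟩
  · rintro (⟨h₁, h₂, h⟩ | ⟨v, ⟨⟨h₁, -⟩, h₂, -⟩, hne⟩)
    exacts [⟨⟨h₁, h₂⟩, h.ne⟩, ⟨⟨h₁, h₂⟩, hne⟩]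

lemma card_disjointEdgePairs_add_sum_choose_degree :
    #(disjointEdgePairs G) + ∑ v, (G.degree v).choose 2 = (#G.edgeFinset).choose 2 := by
  rw [← card_filter_sym2_not_isDiag, filter_sym2_edgeFinset_not_isDiag,
    card_union_of_disjoint (disjoint_disjointEdgePairs_biUnion_incidentEdgePairs G),
    card_biUnion (pairwiseDisjoint_incidentEdgePairs G)]
  simp only [card_incidentEdgePairs]

lemma choose_two_choose_two (n : ℕ) :
    (n.choose 2).choose 2 = n * (n - 1).choose 2 + 3 * n.choose 4 := by
  obtain hn | ⟨k, rfl⟩ : n < 4 ∨ ∃ k, n = k + 4 :=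
    (lt_or_ge n 4).imp_right fun h => ⟨n - 4, by omega⟩
  · interval_cases n <;> rfl
  · have h₄ : 24 * (k + 4).choose 4 = (k + 4) * (k + 3) * (k + 2) * (k + 1) := by
      rw [show 24 = Nat.factorial 4 from rfl, ← Nat.descFactorial_eq_factorial_mul_choose]
      simp [Nat.descFactorial_succ]
      ring
    have h₄' : ((k + 4).choose 4 : ℚ) = (k + 4) * (k + 3) * (k + 2) * (k + 1) / 24 := by
      rw [eq_div_iff (by norm_num)]
      exact_mod_cast (mul_comm _ _).trans h₄
    have : (((k + 4).choose 2).choose 2 : ℚ) =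
        (k + 4) * (k + 3).choose 2 + 3 * (k + 4).choose 4 := by
      simp only [Nat.cast_choose_two, h₄']
      push_cast [Nat.cast_choose_two]
      ring
    exact_mod_cast this

lemma card_disjointEdgePairs_top :
    #(disjointEdgePairs (⊤ : SimpleGraph V)) = 3 * (Fintype.card V).choose 4 := by
  have h := card_disjointEdgePairs_add_sum_choose_degree (⊤ : SimpleGraph V)
  simp only [SimpleGraph.complete_graph_degree, sum_const, card_univ, smul_eq_mul,
    SimpleGraph.card_edgeFinset_top_eq_card_choose_two, choose_two_choose_two] at h
  omega

end Counting

theorem stmt5_general {V W : Type*} [Fintype V] [Fintype W] [DecidableEq V] [DecidableEq W]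
    (n : ℕ) (hn : 4 ≤ n) (hV : Fintype.card V = n) (hW : Fintype.card W = n)
    (G : SimpleGraph V) [DecidableRel G.Adj]
    (f : W → ℝ × ℝ) :
    (∑ σ : V ≃ W, (crossingNumber G (fun v => f (σ v)) : ℚ)) / (n.factorial : ℚ)
      = (crossingNumber (⊤ : SimpleGraph W) f : ℚ) / (3 * (n.choose 4 : ℚ)) *
          ((G.edgeFinset.card.choose 2 : ℚ) - ∑ v : V, ((G.degree v).choose 2 : ℚ)) := by
  have hG : (#(disjointEdgePairs G) : ℚ) =
      (#G.edgeFinset).choose 2 - ∑ v, ((G.degree v).choose 2 : ℚ) := by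
    rw [eq_sub_iff_add_eq]
    exact_mod_cast card_disjointEdgePairs_add_sum_choose_degree G
  have hTop : #(disjointEdgePairs (⊤ : SimpleGraph V)) = 3 * n.choose 4 :=
    hV ▸ card_disjointEdgePairs_top
  obtain ⟨p₀, hp₀⟩ : (disjointEdgePairs (⊤ : SimpleGraph V)).Nonempty := by
    rw [← card_pos, hTop]
    exact Nat.mul_pos three_pos (Nat.choose_pos hn)
  have hsumG := sum_crossingNumber_comp_equiv G f hp₀
  have hsumTop := sum_crossingNumber_comp_equiv ⊤ f hp₀
  simp only [crossingNumber_top_comp_equiv, sum_const, card_univ, hTop, smul_eq_mul,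
    Fintype.card_equiv (Fintype.equivOfCardEq (hV.trans hW.symm)), hV] at hsumTop
  simp only [Function.comp_def] at hsumG
  have hC : (n.choose 4 : ℚ) ≠ 0 := by exact_mod_cast (Nat.choose_pos hn).ne'
  rw [← Nat.cast_sum, hsumG, ← hG]
  have hTop' := congrArg (Nat.cast : ℕ → ℚ) hsumTop
  push_cast at hTop' ⊢
  field_simp
  linear_combination -(#(disjointEdgePairs G) : ℚ) * hTop'

/-- the average, over all bijections `σ : V → W`, of the crossing number of
the induced drawing of `G` in a rectilinear drawing `f` of the complete graph on `W`. -/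
theorem stmt5 {V W : Type*} [Fintype V] [Fintype W] [DecidableEq V] [DecidableEq W]
    (n : ℕ) (hn : 4 ≤ n) (hV : Fintype.card V = n) (hW : Fintype.card W = n)
    (G : SimpleGraph V) [DecidableRel G.Adj]
    (f : W → ℝ × ℝ) (hf : IsRectilinearDrawing f) :
    (∑ σ : V ≃ W, (crossingNumber G (fun v => f (σ v)) : ℚ)) / (n.factorial : ℚ)
      = (crossingNumber (⊤ : SimpleGraph W) f : ℚ) / (3 * (n.choose 4 : ℚ)) *
          ((G.edgeFinset.card.choose 2 : ℚ) - ∑ v : V, ((G.degree v).choose 2 : ℚ)) :=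
  stmt5_general n hn hV hW G f
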